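/- For every positive integer n and every λ ∈ ℂ, the space Sym_n(ℂ)×Sym_n(ℂ) is the direct sum of the subspace T(Δ_n, Λ_n(λ)) and the subspace P := { (0, Y) : Y ∈ Sym_n(ℂ), Y_{ij} = 0 whenever |i−j| > 1 or i+j > n+1 }. In particular, every pair of symmetric n×n complex matrices can be reduced to exactly one element of P by adding (C^T Δ_n + Δ_n C, C^T Λ_n(λ) + Λ_n(λ) C) for C ∈ ℂ^{n×n}. -/

import Mathlib

open Matrix

noncomputable section

/-- `Λ_n(λ)`: the `n × n` matrix with `(i,j)` entry `λ` if `i + j = n + 1`, `1` if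
`i + j = n + 2`, and `0` otherwise (1-based indices). -/
def lamM (n : ℕ) (lam : ℂ) : Matrix (Fin n) (Fin n) ℂ :=
  Matrix.of fun i j =>
    if (i : ℕ) + 1 + ((j : ℕ) + 1) = n + 1 then lam
    else if (i : ℕ) + 1 + ((j : ℕ) + 1) = n + 2 then 1 else 0

/-- `Δ_n`: the `n × n` matrix with `(i,j)` entry `1` if `i + j = n + 1` and `0`
otherwise (1-based indices). -/
def delM (n : ℕ) : Matrix (Fin n) (Fin n) ℂ :=
  Matrix.of fun i j => if (i : ℕ) + 1 + ((j : ℕ) + 1) = n + 1 then 1 else 0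

/-- `F_n`: the `n × (n+1)` matrix with `F_n(i,j) = 1` exactly when `j = i`. -/
def FM (n : ℕ) : Matrix (Fin n) (Fin (n + 1)) ℂ :=
  Matrix.of fun i j => if (j : ℕ) = (i : ℕ) then 1 else 0

/-- `G_n`: the `n × (n+1)` matrix with `G_n(i,j) = 1` exactly when `j = i + 1`. -/
def GM (n : ℕ) : Matrix (Fin n) (Fin (n + 1)) ℂ :=
  Matrix.of fun i j => if (j : ℕ) = (i : ℕ) + 1 then 1 else 0

/-- `L_n^{(1)} = [[0, F_nᵀ], [F_n, 0]]`, a symmetric `(2n+1) × (2n+1)` matrix. -/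
def L1M (n : ℕ) : Matrix (Fin (2 * n + 1)) (Fin (2 * n + 1)) ℂ :=
  Matrix.reindex (finSumFinEquiv.trans (finCongr (by omega)))
    (finSumFinEquiv.trans (finCongr (by omega)))
    (Matrix.fromBlocks 0 (FM n)ᵀ (FM n) 0)

/-- `L_n^{(2)} = [[0, G_nᵀ], [G_n, 0]]`, a symmetric `(2n+1) × (2n+1)` matrix. -/
def L2M (n : ℕ) : Matrix (Fin (2 * n + 1)) (Fin (2 * n + 1)) ℂ :=
  Matrix.reindex (finSumFinEquiv.trans (finCongr (by omega)))
    (finSumFinEquiv.trans (finCongr (by omega)))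
    (Matrix.fromBlocks 0 (GM n)ᵀ (GM n) 0)

theorem lamM_isSymm (n : ℕ) (lam : ℂ) : (lamM n lam).IsSymm := by
  unfold Matrix.IsSymm lamM
  ext i j
  simp only [Matrix.transpose_apply, Matrix.of_apply]
  split_ifs <;> first | rfl | omega

theorem delM_isSymm (n : ℕ) : (delM n).IsSymm := by
  unfold Matrix.IsSymm delM
  ext i j
  simp only [Matrix.transpose_apply, Matrix.of_apply]
  split_ifs <;> first | rfl | omega

theorem L1M_isSymm (n : ℕ) : (L1M n).IsSymm := by
  unfold Matrix.IsSymm L1M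
  rw [Matrix.transpose_reindex, Matrix.fromBlocks_transpose]
  simp

theorem L2M_isSymm (n : ℕ) : (L2M n).IsSymm := by
  unfold Matrix.IsSymm L2M
  rw [Matrix.transpose_reindex, Matrix.fromBlocks_transpose]
  simp

/-- The type of canonical summands: `H_k(λ)`, `K_k`, `L_k`. -/
inductive CanType where
  | H : ℕ → ℂ → CanType
  | K : ℕ → CanType
  | L : ℕ → CanType

/-- The size of a canonical pair. -/
def CanType.size : CanType → ℕ
  | .H k _ => k
  | .K k => k
  | .L k => 2 * k + 1

/-- The size parameter of a canonical pair. -/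
def CanType.param : CanType → ℕ
  | .H k _ => k
  | .K k => k
  | .L k => k

/-- The first matrix of a canonical pair. -/
def CanType.A : (c : CanType) → Matrix (Fin c.size) (Fin c.size) ℂ
  | .H k _ => delM k
  | .K k => lamM k 0
  | .L k => L1M k

/-- The second matrix of a canonical pair. -/
def CanType.B : (c : CanType) → Matrix (Fin c.size) (Fin c.size) ℂ
  | .H k lam => lamM k lam
  | .K k => delM k
  | .L k => L2M k

/-- Congruence of pairs of square complex matrices (over possibly different index
types): `(A', B') = (Sᵀ A S, Sᵀ B S)` for some invertible `S`. -/
def CongruentPairs {ι κ : Type} [Fintype ι] [Fintype κ] [DecidableEq ι] [DecidableEq κ]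
    (p : Matrix ι ι ℂ × Matrix ι ι ℂ) (q : Matrix κ κ ℂ × Matrix κ κ ℂ) : Prop :=
  ∃ S : Matrix ι κ ℂ, (∃ T : Matrix κ ι ℂ, S * T = 1 ∧ T * S = 1) ∧
    q.1 = Sᵀ * p.1 * S ∧ q.2 = Sᵀ * p.2 * S

/-- The space of pairs of symmetric `ι × ι` complex matrices, as a subspace of all pairs. -/
def SymPair (ι : Type) [Fintype ι] : Submodule ℂ (Matrix ι ι ℂ × Matrix ι ι ℂ) where
  carrier := {p | p.1.IsSymm ∧ p.2.IsSymm}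
  add_mem' ha hb := ⟨ha.1.add hb.1, ha.2.add hb.2⟩
  zero_mem' := ⟨Matrix.isSymm_zero, Matrix.isSymm_zero⟩
  smul_mem' c p hp := ⟨hp.1.smul c, hp.2.smul c⟩

/-- The linear map `C ↦ (CᵀA + AC, CᵀB + BC)`. -/
def congMap {ι : Type} [Fintype ι] (A B : Matrix ι ι ℂ) :
    Matrix ι ι ℂ →ₗ[ℂ] Matrix ι ι ℂ × Matrix ι ι ℂ where
  toFun C := (Cᵀ * A + A * C, Cᵀ * B + B * C)
  map_add' C D := by
    simp only [Matrix.transpose_add, Matrix.add_mul, Matrix.mul_add, Prod.mk_add_mk, Prod.ext_iff]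
    constructor <;> abel
  map_smul' c C := by
    simp only [Matrix.transpose_smul, Matrix.smul_mul, Matrix.mul_smul, RingHom.id_apply,
      Prod.smul_mk, smul_add]

/-- `T(A,B) = {(CᵀA + AC, CᵀB + BC) : C}`, the tangent space to the congruence class. -/
def TSpace {ι : Type} [Fintype ι] (A B : Matrix ι ι ℂ) :
    Submodule ℂ (Matrix ι ι ℂ × Matrix ι ι ℂ) :=
  LinearMap.range (congMap A B)

/-- The pattern space determined by two sets of positions: pairs of symmetric matrices
supported on `I1` resp. `I2`. -/
def Pattern {ι : Type} [Fintype ι] (I1 I2 : Set (ι × ι)) :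
    Submodule ℂ (Matrix ι ι ℂ × Matrix ι ι ℂ) where
  carrier := {p | p.1.IsSymm ∧ p.2.IsSymm ∧ (∀ i j, (i, j) ∉ I1 → p.1 i j = 0) ∧
    (∀ i j, (i, j) ∉ I2 → p.2 i j = 0)}
  add_mem' := by
    rintro a b ⟨ha1, ha2, ha3, ha4⟩ ⟨hb1, hb2, hb3, hb4⟩
    exact ⟨ha1.add hb1, ha2.add hb2,
      fun i j h => by show a.1 i j + b.1 i j = 0; rw [ha3 i j h, hb3 i j h, add_zero],
      fun i j h => by show a.2 i j + b.2 i j = 0; rw [ha4 i j h, hb4 i j h, add_zero]⟩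
  zero_mem' := ⟨Matrix.isSymm_zero, Matrix.isSymm_zero, fun _ _ _ => rfl, fun _ _ _ => rfl⟩
  smul_mem' := by
    rintro c a ⟨ha1, ha2, ha3, ha4⟩
    exact ⟨ha1.smul c, ha2.smul c,
      fun i j h => by show c * a.1 i j = 0; rw [ha3 i j h, mul_zero],
      fun i j h => by show c * a.2 i j = 0; rw [ha4 i j h, mul_zero]⟩

theorem Pattern_le {ι : Type} [Fintype ι] (I1 I2 : Set (ι × ι)) :
    Pattern I1 I2 ≤ SymPair ι := fun _ hp => ⟨hp.1, hp.2.1⟩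

end

/-! Put `D = Δ C`; since `Δ² = 1` and `Λ(λ) = λΔ + UΔ` with `U` the down shift, the tangent vector
of `C` is `(Dᵀ + D, λ(Dᵀ + D) + (UD)ᵀ + UD)`. If it lies in `P`, then `D` is skew and every entry
`(i, j)` outside the pattern gives `D (i-1) j = D i (j-1)`. Along an antidiagonal these relations
carry the zero entry just outside the matrix to every entry above the main antidiagonal, and
carry `D a b` to `D b a = -D a b` below it; so `D = 0`. Hence `T ∩ P = 0` and `dim T = n²`, while
`dim P ≥ n` and `dim (Sym × Sym) = n² + n`, so `T ⊕ P` exhausts `Sym × Sym`. -/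

theorem eq_of_forall_sub_one_eq {α : Type*} (g : ℤ → α) {a b : ℤ} (hab : a ≤ b)
    (h : ∀ k, a < k → k ≤ b → g (k - 1) = g k) : g a = g b := by
  induction b, hab using Int.leInduction with
  | base => rfl
  | succ b hab ih =>
    rw [ih fun k hak hkb => h k hak (by omega), ← h (b + 1) (by omega) le_rfl,
      add_sub_cancel_right]

theorem eq_zero_of_skew_of_sub_one_eq {G : Type*} [AddCommGroup G] [IsAddTorsionFree G]
    (n : ℕ) (W : ℤ → ℤ → G)
    (hsupp : ∀ i j : ℤ, ¬(0 ≤ i ∧ i < n ∧ 0 ≤ j ∧ j < n) → W i j = 0)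
    (hskew : ∀ i j : ℤ, W j i = -W i j)
    (hshift : ∀ i j : ℤ, 0 ≤ i → i < n → 0 ≤ j → j < n →
      ¬((i ≤ j + 1 ∧ j ≤ i + 1) ∧ i + 1 + (j + 1) ≤ n + 1) → W (i - 1) j = W i (j - 1)) :
    W = 0 := by
  have walk : ∀ s a b : ℤ, a ≤ b → (∀ k, a < k → k ≤ b →
      0 ≤ k ∧ k < n ∧ 0 ≤ s + 1 - k ∧ s + 1 - k < n ∧
      ¬((k ≤ s + 1 - k + 1 ∧ s + 1 - k ≤ k + 1) ∧ k + 1 + (s + 1 - k + 1) ≤ n + 1)) →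
      W a (s - a) = W b (s - b) := by
    intro s a b hab hk
    refine eq_of_forall_sub_one_eq (fun k => W k (s - k)) hab fun k hak hkb => ?_
    obtain ⟨h1, h2, h3, h4, h5⟩ := hk k hak hkb
    convert hshift k (s + 1 - k) h1 h2 h3 h4 h5 using 2 <;> ring
  have diag : ∀ a : ℤ, W a a = 0 := fun a => self_eq_neg.mp (hskew a a)
  have upper : ∀ a b : ℤ, 0 ≤ a → a < b → b < n → W a b = 0 := by
    intro a b ha hab hb
    rcases lt_or_ge (a + b) (n - 1) with hs | hs
    · -- near the top-left corner the walk reaches the zero entry `W (-1) (a + b + 1)`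
      have h := walk (a + b) (-1) a (by omega) fun k _ _ => by omega
      rwa [hsupp _ _ (by omega), add_sub_cancel_left, eq_comm] at h
    · have h := walk (a + b) a b hab.le fun k _ _ => by omega
      rw [add_sub_cancel_left, add_sub_cancel_right, hskew a b] at h
      exact self_eq_neg.mp h
  funext i j
  show W i j = 0
  by_cases hij : 0 ≤ i ∧ i < n ∧ 0 ≤ j ∧ j < n
  · rcases lt_trichotomy i j with h | rfl | h
    · exact upper i j hij.1 h hij.2.2.2
    · exact diag i
    · rw [← neg_eq_zero, ← hskew, upper j i hij.2.2.1 h hij.2.1]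
  · exact hsupp i j hij

def zeroExtend {α : Type*} [Zero α] {m n : ℕ} (M : Matrix (Fin m) (Fin n) α) (i j : ℤ) : α :=
  if h : 0 ≤ i ∧ i < m ∧ 0 ≤ j ∧ j < n then M ⟨i.toNat, by omega⟩ ⟨j.toNat, by omega⟩ else 0

section zeroExtend

variable {α : Type*} {m n : ℕ}

theorem zeroExtend_natCast [Zero α] (M : Matrix (Fin m) (Fin n) α) (i : Fin m) (j : Fin n) :
    zeroExtend M (i : ℕ) (j : ℕ) = M i j := by
  rw [zeroExtend, dif_pos (by omega)]
  rfl

theorem zeroExtend_eq_zero [Zero α] (M : Matrix (Fin m) (Fin n) α) {i j : ℤ}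
    (h : ¬(0 ≤ i ∧ i < m ∧ 0 ≤ j ∧ j < n)) : zeroExtend M i j = 0 :=
  dif_neg h

theorem eq_zero_of_zeroExtend_eq_zero [Zero α] {M : Matrix (Fin m) (Fin n) α}
    (h : zeroExtend M = 0) : M = 0 := by
  ext i j
  rw [← zeroExtend_natCast M i j, h]
  rfl

theorem zeroExtend_swap_of_transpose_eq_neg [AddGroup α] {M : Matrix (Fin n) (Fin n) α}
    (hM : Mᵀ = -M) (i j : ℤ) : zeroExtend M j i = -zeroExtend M i j := by
  by_cases h : 0 ≤ i ∧ i < n ∧ 0 ≤ j ∧ j < n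
  · rw [zeroExtend, zeroExtend, dif_pos (by omega), dif_pos h, ← neg_apply, ← hM]
    rfl
  · rw [zeroExtend_eq_zero M h, zeroExtend_eq_zero M (by omega), neg_zero]

end zeroExtend

theorem existsUnique_mem_eq_add_of_disjoint {R M N : Type*} [Ring R] [AddCommGroup M]
    [Module R M] [AddCommGroup N] [Module R N] (f : M →ₗ[R] N) {P : Submodule R N}
    (hd : Disjoint (LinearMap.range f) P) {v : N} (hv : v ∈ LinearMap.range f ⊔ P) :
    ∃! p, p ∈ P ∧ ∃ x, p = v + f x := by
  obtain ⟨_, ⟨x, rfl⟩, p, hp, hsum⟩ := Submodule.mem_sup.mp hv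
  refine ⟨p, ⟨hp, -x, by rw [← hsum, map_neg, add_neg_cancel_comm]⟩, ?_⟩
  rintro q ⟨hq, y, rfl⟩
  have hdiff : v + f y - p ∈ LinearMap.range f := ⟨y + x, by rw [← hsum, map_add]; abel⟩
  exact sub_eq_zero.mp (Submodule.disjoint_def.mp hd _ hdiff (sub_mem hq hp))

theorem congMap_apply_of_isSymm {ι : Type} [Fintype ι] {A B : Matrix ι ι ℂ} (hA : A.IsSymm)
    (hB : B.IsSymm) (C : Matrix ι ι ℂ) :
    congMap A B C = ((A * C)ᵀ + A * C, (B * C)ᵀ + B * C) := by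
  rw [transpose_mul, transpose_mul, hA.eq, hB.eq]
  rfl

theorem TSpace_le_symPair {ι : Type} [Fintype ι] {A B : Matrix ι ι ℂ} (hA : A.IsSymm)
    (hB : B.IsSymm) : TSpace A B ≤ SymPair ι := by
  rintro _ ⟨C, rfl⟩
  rw [congMap_apply_of_isSymm hA hB]
  exact ⟨isSymm_transpose_add_self _, isSymm_transpose_add_self _⟩

def upperLowerDiag (ι : Type) [LinearOrder ι] :
    (Matrix ι ι ℂ × Matrix ι ι ℂ) →ₗ[ℂ] Matrix ι ι ℂ × (ι → ℂ) where
  toFun p := (of fun i j => if i ≤ j then p.1 i j else p.2 i j, p.2.diag)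
  map_add' p q := by
    ext i j <;> simp only [of_apply, Prod.fst_add, Prod.snd_add, Matrix.add_apply, diag_add,
      Pi.add_apply]
    split_ifs <;> rfl
  map_smul' c p := by
    ext i j <;> simp only [of_apply, Prod.smul_fst, Prod.smul_snd, Matrix.smul_apply, diag_smul,
      Pi.smul_apply, RingHom.id_apply]
    split_ifs <;> rfl

theorem ker_domRestrict_upperLowerDiag (ι : Type) [Fintype ι] [LinearOrder ι] :
    LinearMap.ker ((upperLowerDiag ι).domRestrict (SymPair ι)) = ⊥ := by
  refine LinearMap.ker_eq_bot'.mpr fun ⟨⟨X, Y⟩, hX, hY⟩ h => ?_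
  have hupper : ∀ i j, (if i ≤ j then X i j else Y i j) = 0 := fun i j =>
    congrFun₂ (congrArg Prod.fst h) i j
  have hdiag : ∀ i, Y i i = 0 := fun i => congrFun (congrArg Prod.snd h) i
  have hXY : ∀ i j, i ≤ j → X i j = 0 ∧ (i ≠ j → Y j i = 0) := fun i j hij =>
    ⟨by simpa [hij] using hupper i j, fun hne => by
      simpa [not_le.mpr (lt_of_le_of_ne hij hne)] using hupper j i⟩
  ext i j
  · show X i j = 0
    rcases le_total i j with hij | hji
    · exact (hXY i j hij).1
    · exact (hX.apply j i).trans (hXY j i hji).1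
  · show Y i j = 0
    rcases lt_trichotomy i j with hij | rfl | hji
    · exact (hY.apply j i).trans ((hXY i j hij.le).2 hij.ne)
    · exact hdiag i
    · exact (hXY j i hji.le).2 hji.ne

theorem finrank_symPair_le (ι : Type) [Fintype ι] [LinearOrder ι] :
    Module.finrank ℂ (SymPair ι) ≤ Fintype.card ι * Fintype.card ι + Fintype.card ι := by
  have := LinearMap.finrank_le_finrank_of_injective
    (LinearMap.ker_eq_bot.mp (ker_domRestrict_upperLowerDiag ι))
  simpa [Module.finrank_prod, Module.finrank_matrix] using this

theorem delM_mul_apply {n k : ℕ} (M : Matrix (Fin n) (Fin k) ℂ) (i : Fin n) (j : Fin k) :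
    (delM n * M) i j = M i.rev j := by
  rw [mul_apply, Finset.sum_eq_single i.rev]
  · simp only [delM, of_apply, Fin.val_rev]
    rw [if_pos (by omega), one_mul]
  · intro l _ hl
    have : (l : ℕ) ≠ i.rev := fun h => hl (Fin.ext h)
    simp only [delM, of_apply]
    rw [if_neg (by rw [Fin.val_rev] at this; omega), zero_mul]
  · simp

theorem delM_mul_self (n : ℕ) : delM n * delM n = 1 := by
  ext i j
  rw [delM_mul_apply, one_apply]
  simp only [delM, of_apply, Fin.val_rev, Fin.ext_iff]
  congr 1
  apply propext
  omega

theorem lamM_eq_smul_delM_add (n : ℕ) (lam : ℂ) : lamM n lam = lam • delM n + lamM n 0 := by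
  ext i j
  simp only [lamM, delM, of_apply, Matrix.add_apply, Matrix.smul_apply, smul_eq_mul]
  split_ifs <;> simp_all

theorem lamM_zero_mul_apply {n k : ℕ} (M : Matrix (Fin n) (Fin k) ℂ) (i : Fin n) (j : Fin k) :
    (lamM n 0 * M) i j = zeroExtend (delM n * M) ((i : ℕ) - 1) (j : ℕ) := by
  rw [mul_apply]
  rcases Nat.eq_zero_or_pos (i : ℕ) with hi | hi
  · rw [zeroExtend_eq_zero _ (by omega)]
    refine Finset.sum_eq_zero fun l _ => ?_
    simp only [lamM, of_apply]
    split_ifs <;> first | omega | simp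
  · let i' : Fin n := ⟨i - 1, by omega⟩
    rw [show ((i : ℕ) : ℤ) - 1 = ((i' : ℕ) : ℤ) by simp [i']; omega, zeroExtend_natCast,
      delM_mul_apply, Finset.sum_eq_single i'.rev]
    · simp only [lamM, of_apply, Fin.val_rev, i']
      rw [if_neg (by omega), if_pos (by omega), one_mul]
    · intro l _ hl
      have : (l : ℕ) ≠ i'.rev := fun h => hl (Fin.ext h)
      simp only [lamM, of_apply, Fin.val_rev, i'] at this ⊢
      split_ifs <;> first | omega | simp
    · simp

theorem lamM_mul_apply {n k : ℕ} (lam : ℂ) (M : Matrix (Fin n) (Fin k) ℂ) (i : Fin n)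
    (j : Fin k) :
    (lamM n lam * M) i j =
      lam * (delM n * M) i j + zeroExtend (delM n * M) ((i : ℕ) - 1) (j : ℕ) := by
  rw [lamM_eq_smul_delM_add, Matrix.add_mul, Matrix.smul_mul, Matrix.add_apply,
    Matrix.smul_apply, smul_eq_mul, lamM_zero_mul_apply]

def tridiagUpperLeft (n : ℕ) : Set (Fin n × Fin n) :=
  {pq | ((pq.1 : ℕ) ≤ (pq.2 : ℕ) + 1 ∧ (pq.2 : ℕ) ≤ (pq.1 : ℕ) + 1) ∧
    (pq.1 : ℕ) + 1 + ((pq.2 : ℕ) + 1) ≤ n + 1}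

theorem eq_zero_of_congMap_mem_pattern {n : ℕ} {lam : ℂ} {C : Matrix (Fin n) (Fin n) ℂ}
    (h : congMap (delM n) (lamM n lam) C ∈ Pattern ∅ (tridiagUpperLeft n)) : C = 0 := by
  obtain ⟨-, -, hfst, hsnd⟩ := h
  rw [congMap_apply_of_isSymm (delM_isSymm n) (lamM_isSymm n lam)] at hfst hsnd
  simp only [Matrix.add_apply, transpose_apply, lamM_mul_apply] at hfst hsnd
  set D := delM n * C
  have hskew : Dᵀ = -D := by
    ext i j
    have := hfst i j (Set.notMem_empty _)
    rw [transpose_apply, Matrix.neg_apply, ← sub_eq_zero, sub_neg_eq_add, this]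
  have hW : zeroExtend D = 0 := by
    refine eq_zero_of_skew_of_sub_one_eq n (zeroExtend D) (fun i j => zeroExtend_eq_zero D)
      (zeroExtend_swap_of_transpose_eq_neg hskew) fun i j hi hin hj hjn hoff => ?_
    lift i to ℕ using hi
    lift j to ℕ using hj
    have hij := hsnd ⟨i, by omega⟩ ⟨j, by omega⟩ fun hmem => hoff (by exact_mod_cast hmem)
    have hD := hfst ⟨i, by omega⟩ ⟨j, by omega⟩ (Set.notMem_empty _)
    have hji := zeroExtend_swap_of_transpose_eq_neg hskew i (j - 1)
    linear_combination hij - lam * hD - hji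
  calc C = delM n * D := by rw [← Matrix.mul_assoc, delM_mul_self, Matrix.one_mul]
    _ = 0 := by rw [eq_zero_of_zeroExtend_eq_zero hW, Matrix.mul_zero]

theorem congMap_delM_lamM_injective (n : ℕ) (lam : ℂ) :
    Function.Injective (congMap (delM n) (lamM n lam)) :=
  (injective_iff_map_eq_zero _).mpr fun _ hC =>
    eq_zero_of_congMap_mem_pattern (hC ▸ zero_mem _)

theorem disjoint_TSpace_pattern (n : ℕ) (lam : ℂ) :
    Disjoint (TSpace (delM n) (lamM n lam)) (Pattern ∅ (tridiagUpperLeft n)) := by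
  refine Submodule.disjoint_def.mpr ?_
  rintro _ ⟨C, rfl⟩ hC
  rw [eq_zero_of_congMap_mem_pattern hC, map_zero]

def antidiagFill (n : ℕ) : (Fin n → ℂ) →ₗ[ℂ] Matrix (Fin n) (Fin n) ℂ where
  toFun f := of fun i j =>
    if h : ((i : ℕ) ≤ (j : ℕ) + 1 ∧ (j : ℕ) ≤ (i : ℕ) + 1) ∧ (i : ℕ) + 1 + ((j : ℕ) + 1) ≤ n + 1
    then f ⟨i + j, by omega⟩ else 0
  map_add' f g := by
    ext i j
    simp only [of_apply, Matrix.add_apply, Pi.add_apply]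
    split_ifs <;> simp
  map_smul' c f := by
    ext i j
    simp only [of_apply, Matrix.smul_apply, Pi.smul_apply, RingHom.id_apply]
    split_ifs <;> simp

theorem antidiagFill_mem_pattern (n : ℕ) (f : Fin n → ℂ) :
    ((0 : Matrix (Fin n) (Fin n) ℂ), antidiagFill n f) ∈ Pattern ∅ (tridiagUpperLeft n) := by
  refine ⟨isSymm_zero, ?_, fun _ _ _ => rfl, fun i j h => dif_neg h⟩
  ext i j
  simp only [antidiagFill, LinearMap.coe_mk, AddHom.coe_mk, transpose_apply, of_apply]
  split_ifs
  · congr 1; ext; simp only; omega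
  all_goals first | rfl | omega

theorem antidiagFill_injective (n : ℕ) : Function.Injective (antidiagFill n) := by
  refine (injective_iff_map_eq_zero _).mpr fun f hf => funext fun s => ?_
  -- `f s` sits at the entry `(⌊s/2⌋, ⌈s/2⌉)` of the antidiagonal `i + j = s`
  have := congrFun₂ hf ⟨s / 2, by omega⟩ ⟨s - s / 2, by omega⟩
  simp only [antidiagFill, LinearMap.coe_mk, AddHom.coe_mk, of_apply] at this
  rw [dif_pos (by omega)] at this
  convert this using 2
  · ext; simp only; omega
  · rfl

theorem le_finrank_pattern (n : ℕ) :
    n ≤ Module.finrank ℂ (Pattern ∅ (tridiagUpperLeft n)) := by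
  let g := LinearMap.inr ℂ (Matrix (Fin n) (Fin n) ℂ) (Matrix (Fin n) (Fin n) ℂ) ∘ₗ antidiagFill n
  have hg : Function.Injective g := LinearMap.inr_injective.comp (antidiagFill_injective n)
  calc n = Module.finrank ℂ (LinearMap.range g) := by
        rw [LinearMap.finrank_range_of_inj hg, Module.finrank_fin_fun]
    _ ≤ _ := Submodule.finrank_mono <| by
        rintro _ ⟨f, rfl⟩
        exact antidiagFill_mem_pattern n f

theorem TSpace_sup_pattern (n : ℕ) (lam : ℂ) :
    TSpace (delM n) (lamM n lam) ⊔ Pattern ∅ (tridiagUpperLeft n) = SymPair (Fin n) := by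
  refine Submodule.eq_of_le_of_finrank_le
    (sup_le (TSpace_le_symPair (delM_isSymm n) (lamM_isSymm n lam)) (Pattern_le _ _)) ?_
  have hT : Module.finrank ℂ (TSpace (delM n) (lamM n lam)) = n * n := by
    rw [TSpace, LinearMap.finrank_range_of_inj (congMap_delM_lamM_injective n lam),
      Module.finrank_matrix]
    simp
  have hsup := Submodule.finrank_sup_add_finrank_inf_eq (TSpace (delM n) (lamM n lam))
    (Pattern ∅ (tridiagUpperLeft n))
  rw [disjoint_iff.mp (disjoint_TSpace_pattern n lam), finrank_bot, add_zero, hT] at hsup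
  have hsym := finrank_symPair_le (Fin n)
  rw [Fintype.card_fin] at hsym
  have := le_finrank_pattern n
  omega

theorem H_diagonal_block_general (n : ℕ) (lam : ℂ) :
    Disjoint (TSpace (delM n) (lamM n lam))
      (Pattern (∅ : Set (Fin n × Fin n))
        {pq : Fin n × Fin n | ((pq.1 : ℕ) ≤ (pq.2 : ℕ) + 1 ∧ (pq.2 : ℕ) ≤ (pq.1 : ℕ) + 1) ∧
          (pq.1 : ℕ) + 1 + ((pq.2 : ℕ) + 1) ≤ n + 1}) ∧
    TSpace (delM n) (lamM n lam) ⊔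
      Pattern (∅ : Set (Fin n × Fin n))
        {pq : Fin n × Fin n | ((pq.1 : ℕ) ≤ (pq.2 : ℕ) + 1 ∧ (pq.2 : ℕ) ≤ (pq.1 : ℕ) + 1) ∧
          (pq.1 : ℕ) + 1 + ((pq.2 : ℕ) + 1) ≤ n + 1} = SymPair (Fin n) ∧
    ∀ v ∈ SymPair (Fin n), ∃! p,
      p ∈ Pattern (∅ : Set (Fin n × Fin n))
        {pq : Fin n × Fin n | ((pq.1 : ℕ) ≤ (pq.2 : ℕ) + 1 ∧ (pq.2 : ℕ) ≤ (pq.1 : ℕ) + 1) ∧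
          (pq.1 : ℕ) + 1 + ((pq.2 : ℕ) + 1) ≤ n + 1} ∧
      ∃ C : Matrix (Fin n) (Fin n) ℂ,
        p = v + (Cᵀ * delM n + delM n * C, Cᵀ * lamM n lam + lamM n lam * C) := by
  have hsup := TSpace_sup_pattern n lam
  refine ⟨disjoint_TSpace_pattern n lam, hsup, fun v hv => ?_⟩
  exact existsUnique_mem_eq_add_of_disjoint _ (disjoint_TSpace_pattern n lam) (hsup ▸ hv)

/-- **Diagonal block `H_n(λ)`.** `Sym × Sym = T(Δ_n, Λ_n(λ)) ⊕ P`, where `P` consists of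
pairs `(0, Y)` with `Y` symmetric and `Y i j = 0` whenever `|i − j| > 1` or
`i + j > n + 1`; in particular every pair of symmetric matrices can be reduced to
exactly one element of `P` by adding `(CᵀΔ_n + Δ_n C, CᵀΛ_n(λ) + Λ_n(λ) C)`. -/
theorem H_diagonal_block (n : ℕ) (hn : 0 < n) (lam : ℂ) :
    Disjoint (TSpace (delM n) (lamM n lam))
      (Pattern (∅ : Set (Fin n × Fin n))
        {pq : Fin n × Fin n | ((pq.1 : ℕ) ≤ (pq.2 : ℕ) + 1 ∧ (pq.2 : ℕ) ≤ (pq.1 : ℕ) + 1) ∧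
          (pq.1 : ℕ) + 1 + ((pq.2 : ℕ) + 1) ≤ n + 1}) ∧
    TSpace (delM n) (lamM n lam) ⊔
      Pattern (∅ : Set (Fin n × Fin n))
        {pq : Fin n × Fin n | ((pq.1 : ℕ) ≤ (pq.2 : ℕ) + 1 ∧ (pq.2 : ℕ) ≤ (pq.1 : ℕ) + 1) ∧
          (pq.1 : ℕ) + 1 + ((pq.2 : ℕ) + 1) ≤ n + 1} = SymPair (Fin n) ∧
    ∀ v ∈ SymPair (Fin n), ∃! p,
      p ∈ Pattern (∅ : Set (Fin n × Fin n))
        {pq : Fin n × Fin n | ((pq.1 : ℕ) ≤ (pq.2 : ℕ) + 1 ∧ (pq.2 : ℕ) ≤ (pq.1 : ℕ) + 1) ∧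
          (pq.1 : ℕ) + 1 + ((pq.2 : ℕ) + 1) ≤ n + 1} ∧
      ∃ C : Matrix (Fin n) (Fin n) ℂ,
        p = v + (Cᵀ * delM n + delM n * C, Cᵀ * lamM n lam + lamM n lam * C) :=
  H_diagonal_block_general n lam
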